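/- arXiv:2502.14946 — 2 statements merged into one kernel-verified Lean document; each statement's English description precedes it below -/
import Mathlib

section
/- Average of the vertical advection term: let h > 0 and let v : ℝ² × ℝ → ℝ² be continuously differentiable such that v̄ = 𝒜₂v satisfies ∂_x v̄₁ + ∂_y v̄₂ ≡ 0, and write ṽ = v − v̄. Then for every (x,y): (1/h)∫_{−h}^0 w(v) ∂_z v (x,y,z) dz = (1/h)∫_{−h}^0 (∇_H·ṽ) ṽ (x,y,z) dz. -/
open MeasureTheory intervalIntegral

/-- The barotropic (vertical) average `v̄ = 𝒜₂v` of a horizontal velocity field. -/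
noncomputable def baroAvg2 (h : ℝ) (v : ℝ → ℝ → ℝ → ℝ × ℝ) (x y : ℝ) : ℝ × ℝ :=
  h⁻¹ • ∫ z in (-h)..(0:ℝ), v x y z

/-!
Fix `(x, y)`, let `D = ∇_H·v` along the column and `W z = ∫_z^0 D`, so that `w(v) = W` and
`∂_z W = -D`. Differentiating under the integral sign, `∇_H·v̄ = 𝒜₂(∇_H·v)`, so the hypothesis
`∇_H·v̄ = 0` says `∫_{-h}^0 D = 0`: `W` vanishes at both ends of the column. Integrating by parts,
`∫ W ∂_z v = ∫ D v`. On the other side `∇_H·ṽ = D`, and `∫ D v̄ = (∫ D) v̄ = 0`.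
-/

open Set Function
open scoped Interval

variable {E : Type*} [NormedAddCommGroup E] [NormedSpace ℝ E]

theorem hasDerivAt_intervalIntegral_of_continuous_uncurry {f f' : ℝ → ℝ → E} {a b : ℝ}
    (hf : ∀ s, Continuous (f s)) (hf' : Continuous (uncurry f'))
    (hd : ∀ s z, HasDerivAt (f · z) (f' s z) s) (x₀ : ℝ) :
    HasDerivAt (fun s => ∫ z in a..b, f s z) (∫ z in a..b, f' x₀ z) x₀ := by
  obtain ⟨C, hC⟩ := ((isCompact_closedBall x₀ 1).prod isCompact_uIcc).exists_bound_of_continuousOn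
    hf'.continuousOn
  have hf'_slice : Continuous (f' x₀) := hf'.comp (continuous_const.prodMk continuous_id)
  refine (hasDerivAt_integral_of_dominated_loc_of_deriv_le (bound := fun _ => C)
    (Metric.ball_mem_nhds x₀ one_pos) (.of_forall fun s => (hf s).aestronglyMeasurable)
    ((hf x₀).intervalIntegrable a b) hf'_slice.aestronglyMeasurable ?_ intervalIntegrable_const
    (.of_forall fun z _ s _ => hd s z)).2
  exact .of_forall fun z hz s hs =>
    hC (s, z) ⟨Metric.ball_subset_closedBall hs, Ioc_subset_Icc_self hz⟩

section Prod

variable {F : Type*} [NormedAddCommGroup F] [NormedSpace ℝ F] {μ : Measure ℝ} {a b : ℝ}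

theorem fst_intervalIntegral [CompleteSpace F] {f : ℝ → E × F}
    (hf : IntervalIntegrable f μ a b) : (∫ z in a..b, f z ∂μ).1 = ∫ z in a..b, (f z).1 ∂μ := by
  simp only [intervalIntegral, Prod.fst_sub, fst_integral hf.1, fst_integral hf.2]

theorem snd_intervalIntegral [CompleteSpace E] {f : ℝ → E × F}
    (hf : IntervalIntegrable f μ a b) : (∫ z in a..b, f z ∂μ).2 = ∫ z in a..b, (f z).2 ∂μ := by
  simp only [intervalIntegral, Prod.snd_sub, snd_integral hf.1, snd_integral hf.2]

end Prod

section Column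

variable [CompleteSpace E] {D : ℝ → ℝ} {a b : ℝ}

theorem integral_primitive_smul_deriv_eq {u u' : ℝ → E} (hD : Continuous D)
    (hu : ∀ z ∈ [[a, b]], HasDerivAt u (u' z) z) (hu' : IntervalIntegrable u' volume a b) :
    ∫ z in a..b, (∫ t in z..b, D t) • u' z
      = (∫ z in a..b, D z • u z) - (∫ z in a..b, D z) • u a := by
  have hW : ∀ z, HasDerivAt (fun z => ∫ t in z..b, D t) (-D z) z := fun z =>
    integral_hasDerivAt_left (hD.intervalIntegrable z b) (hD.stronglyMeasurableAtFilter _ _)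
      hD.continuousAt
  rw [integral_smul_deriv_eq_deriv_smul (fun z _ => hW z) hu (hD.neg.intervalIntegrable a b) hu']
  simp only [integral_same, zero_smul, zero_sub, neg_smul, intervalIntegral.integral_neg]
  abel

theorem integral_smul_sub_const {u : ℝ → E} (c : E) (hD : IntervalIntegrable D volume a b)
    (hDu : IntervalIntegrable (fun z => D z • u z) volume a b) :
    ∫ z in a..b, D z • (u z - c) = (∫ z in a..b, D z • u z) - (∫ z in a..b, D z) • c := by
  simp_rw [smul_sub]
  rw [intervalIntegral.integral_sub hDu (hD.smul_continuousOn continuousOn_const),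
    intervalIntegral.integral_smul_const]

end Column

section BarotropicAverage

variable {v vx vy : ℝ → ℝ → ℝ → ℝ × ℝ} (h : ℝ)

theorem hasDerivAt_baroAvg2_x (hv : ∀ x y, Continuous (v x y))
    (hvx : ∀ x y z, HasDerivAt (fun x' => v x' y z) (vx x y z) x)
    (hcvx : Continuous fun p : ℝ × ℝ × ℝ => vx p.1 p.2.1 p.2.2) (x y : ℝ) :
    HasDerivAt (fun x' => baroAvg2 h v x' y) (h⁻¹ • ∫ z in (-h)..0, vx x y z) x :=
  (hasDerivAt_intervalIntegral_of_continuous_uncurry (f' := fun s z => vx s y z)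
    (fun s => hv s y) (hcvx.comp (by fun_prop : Continuous fun p : ℝ × ℝ => (p.1, y, p.2)))
    (fun s z => hvx s y z) x).const_smul h⁻¹

theorem hasDerivAt_baroAvg2_y (hv : ∀ x y, Continuous (v x y))
    (hvy : ∀ x y z, HasDerivAt (fun y' => v x y' z) (vy x y z) y)
    (hcvy : Continuous fun p : ℝ × ℝ × ℝ => vy p.1 p.2.1 p.2.2) (x y : ℝ) :
    HasDerivAt (fun y' => baroAvg2 h v x y') (h⁻¹ • ∫ z in (-h)..0, vy x y z) y :=
  (hasDerivAt_intervalIntegral_of_continuous_uncurry (f' := fun s z => vy x s z)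
    (fun s => hv x s) (hcvy.comp (by fun_prop : Continuous fun p : ℝ × ℝ => (x, p.1, p.2)))
    (fun s z => hvy x s z) y).const_smul h⁻¹

theorem divergence_baroAvg2_eq_mul_integral {vbx vby : ℝ × ℝ} (hv : ∀ x y, Continuous (v x y))
    (hvx : ∀ x y z, HasDerivAt (fun x' => v x' y z) (vx x y z) x)
    (hvy : ∀ x y z, HasDerivAt (fun y' => v x y' z) (vy x y z) y)
    (hcvx : Continuous fun p : ℝ × ℝ × ℝ => vx p.1 p.2.1 p.2.2)
    (hcvy : Continuous fun p : ℝ × ℝ × ℝ => vy p.1 p.2.1 p.2.2) {x y : ℝ}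
    (hbx : HasDerivAt (fun x' => baroAvg2 h v x' y) vbx x)
    (hby : HasDerivAt (fun y' => baroAvg2 h v x y') vby y) :
    vbx.1 + vby.2 = h⁻¹ * ∫ z in (-h)..0, ((vx x y z).1 + (vy x y z).2) := by
  have hcol : Continuous fun z : ℝ => (x, y, z) := by fun_prop
  have hvx_z : Continuous (vx x y) := hcvx.comp hcol
  have hvy_z : Continuous (vy x y) := hcvy.comp hcol
  rw [hbx.unique (hasDerivAt_baroAvg2_x h hv hvx hcvx x y),
    hby.unique (hasDerivAt_baroAvg2_y h hv hvy hcvy x y), Prod.smul_fst, Prod.smul_snd,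
    fst_intervalIntegral (hvx_z.intervalIntegrable _ _),
    snd_intervalIntegral (hvy_z.intervalIntegrable _ _), smul_eq_mul, smul_eq_mul, ← mul_add,
    intervalIntegral.integral_add (hvx_z.fst.intervalIntegrable _ _)
      (hvy_z.snd.intervalIntegrable _ _)]

end BarotropicAverage

theorem avg_vertical_advection_general
    (h : ℝ)
    (v vx vy vz : ℝ → ℝ → ℝ → ℝ × ℝ)
    (vbx vby : ℝ → ℝ → ℝ × ℝ)
    (hvx : ∀ x y z : ℝ, HasDerivAt (fun x' => v x' y z) (vx x y z) x)
    (hvy : ∀ x y z : ℝ, HasDerivAt (fun y' => v x y' z) (vy x y z) y)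
    (hvz : ∀ x y z : ℝ, HasDerivAt (fun z' => v x y z') (vz x y z) z)
    (hcvx : Continuous fun p : ℝ × ℝ × ℝ => vx p.1 p.2.1 p.2.2)
    (hcvy : Continuous fun p : ℝ × ℝ × ℝ => vy p.1 p.2.1 p.2.2)
    (hcvz : Continuous fun p : ℝ × ℝ × ℝ => vz p.1 p.2.1 p.2.2)
    (hbx : ∀ x y : ℝ, HasDerivAt (fun x' => baroAvg2 h v x' y) (vbx x y) x)
    (hby : ∀ x y : ℝ, HasDerivAt (fun y' => baroAvg2 h v x y') (vby x y) y)
    (hdiv : ∀ x y : ℝ, (vbx x y).1 + (vby x y).2 = 0) :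
    ∀ x y : ℝ,
      h⁻¹ • (∫ z in (-h)..(0:ℝ),
          (∫ z' in z..(0:ℝ), ((vx x y z').1 + (vy x y z').2)) • vz x y z)
        = h⁻¹ • (∫ z in (-h)..(0:ℝ),
            ((vx x y z - vbx x y).1 + (vy x y z - vby x y).2)
              • (v x y z - baroAvg2 h v x y)) := by
  intro x y
  rcases eq_or_ne h⁻¹ 0 with hinv | hinv
  · simp [hinv]
  congr 1
  have hv : ∀ x y, Continuous (v x y) := fun x y =>
    continuous_iff_continuousAt.2 fun z => (hvz x y z).continuousAt
  have hcol : Continuous fun z : ℝ => (x, y, z) := by fun_prop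
  set D : ℝ → ℝ := fun z => (vx x y z).1 + (vy x y z).2 with hD
  have hDc : Continuous D := (hcvx.comp hcol).fst.add (hcvy.comp hcol).snd
  have hmean : ∫ z in (-h)..0, D z = 0 :=
    (mul_eq_zero.1 <| (divergence_baroAvg2_eq_mul_integral h hv hvx hvy hcvx hcvy (hbx x y)
      (hby x y)).symm.trans (hdiv x y)).resolve_left hinv
  have hdiv_tilde : ∀ z, (vx x y z - vbx x y).1 + (vy x y z - vby x y).2 = D z := fun z => by
    simp only [hD, Prod.fst_sub, Prod.snd_sub]
    linarith [hdiv x y]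
  simp_rw [hdiv_tilde]
  rw [integral_primitive_smul_deriv_eq hDc (fun z _ => hvz x y z)
      ((hcvz.comp hcol).intervalIntegrable _ _),
    integral_smul_sub_const _ (hDc.intervalIntegrable _ _)
      ((hDc.smul (hv x y)).intervalIntegrable _ _),
    hmean, zero_smul, zero_smul]

/-- **Average of the vertical advection term.**
Let `v : ℝ² × ℝ → ℝ²` be continuously differentiable (partial derivatives
`vx, vy, vz` supplied as data, jointly continuous), with `v̄ = 𝒜₂v` differentiable
with horizontal partials `vbx, vby` and `∂_x v̄₁ + ∂_y v̄₂ ≡ 0`; write `ṽ = v − v̄`,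
`w(v)(x,y,z) = ∫_z^0 (∇_H·v)(x,y,z') dz'`. Then for every `(x,y)`:
`(1/h)∫_{−h}^0 w(v) ∂_z v dz = (1/h)∫_{−h}^0 (∇_H·ṽ) ṽ dz`. -/
theorem avg_vertical_advection
    (h : ℝ) (hh : 0 < h)
    (v vx vy vz : ℝ → ℝ → ℝ → ℝ × ℝ)
    (vbx vby : ℝ → ℝ → ℝ × ℝ)
    (hvx : ∀ x y z : ℝ, HasDerivAt (fun x' => v x' y z) (vx x y z) x)
    (hvy : ∀ x y z : ℝ, HasDerivAt (fun y' => v x y' z) (vy x y z) y)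
    (hvz : ∀ x y z : ℝ, HasDerivAt (fun z' => v x y z') (vz x y z) z)
    (hcv : Continuous fun p : ℝ × ℝ × ℝ => v p.1 p.2.1 p.2.2)
    (hcvx : Continuous fun p : ℝ × ℝ × ℝ => vx p.1 p.2.1 p.2.2)
    (hcvy : Continuous fun p : ℝ × ℝ × ℝ => vy p.1 p.2.1 p.2.2)
    (hcvz : Continuous fun p : ℝ × ℝ × ℝ => vz p.1 p.2.1 p.2.2)
    (hbx : ∀ x y : ℝ, HasDerivAt (fun x' => baroAvg2 h v x' y) (vbx x y) x)
    (hby : ∀ x y : ℝ, HasDerivAt (fun y' => baroAvg2 h v x y') (vby x y) y)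
    (hdiv : ∀ x y : ℝ, (vbx x y).1 + (vby x y).2 = 0) :
    ∀ x y : ℝ,
      h⁻¹ • (∫ z in (-h)..(0:ℝ),
          (∫ z' in z..(0:ℝ), ((vx x y z').1 + (vy x y z').2)) • vz x y z)
        = h⁻¹ • (∫ z in (-h)..(0:ℝ),
            ((vx x y z - vbx x y).1 + (vy x y z - vby x y).2)
              • (v x y z - baroAvg2 h v x y)) :=
  avg_vertical_advection_general h v vx vy vz vbx vby hvx hvy hvz hcvx hcvy hcvz hbx hby hdiv
end

section
/- Orthogonality of the transport of the vertical gradient: let h > 0 and let v : ℝ² × ℝ → ℝ² be twice continuously differentiable, compactly supported in the horizontal variables (there is a compact Q ⊂ ℝ² with v(x,y,z) = 0 whenever (x,y) ∉ Q), and satisfying ∫_{−h}^0 (∇_H·v)(x,y,z) dz = 0 for all (x,y). Then ∫_{ℝ² × [−h,0]} [(v·∇_H)∂_z v + w(v)∂_{zz} v] · ∂_z v dx dy dz = 0. -/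
open MeasureTheory intervalIntegral

/-- Partial derivative in `x` of a field on `ℝ² × ℝ` (coordinates `(x,y,z)`). -/
noncomputable def pdX (v : ℝ × ℝ × ℝ → ℝ × ℝ) (q : ℝ × ℝ × ℝ) : ℝ × ℝ :=
  fderiv ℝ v q (1, 0, 0)

/-- Partial derivative in `y`. -/
noncomputable def pdY (v : ℝ × ℝ × ℝ → ℝ × ℝ) (q : ℝ × ℝ × ℝ) : ℝ × ℝ :=
  fderiv ℝ v q (0, 1, 0)

/-- Partial derivative in `z`. -/
noncomputable def pdZ (v : ℝ × ℝ × ℝ → ℝ × ℝ) (q : ℝ × ℝ × ℝ) : ℝ × ℝ :=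
  fderiv ℝ v q (0, 0, 1)

/-- The vertical velocity `w(v)(x,y,z) = ∫_z^0 (∇_H·v)(x,y,z') dz'`. -/
noncomputable def wVert (v : ℝ × ℝ × ℝ → ℝ × ℝ) (q : ℝ × ℝ × ℝ) : ℝ :=
  ∫ z' in q.2.2..(0:ℝ), ((pdX v (q.1, q.2.1, z')).1 + (pdY v (q.1, q.2.1, z')).2)

/-!
With `E = |∂_z v|² / 2`, the integrand is `v₁ ∂ₓE + v₂ ∂_yE + w ∂_zE`.
Since `∂_z w(v) = -∇_H·v`, it is the divergence `∂ₓ(v₁E) + ∂_y(v₂E) + ∂_z(wE)`.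
Integrate each term first in its own variable: the horizontal ones vanish by the
compact horizontal support of `v`, the vertical one because `w(v)` vanishes at `z = 0`
by definition and at `z = -h` by the hypothesis on `∫ ∇_H·v`.
-/

open Set

section Fubini

variable {α β E : Type*} [MeasurableSpace α] [MeasurableSpace β] [NormedAddCommGroup E]
  [NormedSpace ℝ E] {μ : Measure α} {ν : Measure β} [SFinite μ] [SFinite ν]

theorem integral_prod_eq_zero_of_forall_integral_right {f : α × β → E}
    (hf : ∀ x, ∫ y, f (x, y) ∂ν = 0) : ∫ z, f z ∂μ.prod ν = 0 := by
  by_cases hint : Integrable f (μ.prod ν)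
  · simp [integral_prod f hint, hf]
  · exact integral_undef hint

theorem integral_prod_eq_zero_of_forall_integral_left {f : α × β → E}
    (hf : ∀ y, ∫ x, f (x, y) ∂μ = 0) : ∫ z, f z ∂μ.prod ν = 0 := by
  by_cases hint : Integrable f (μ.prod ν)
  · simp [integral_prod_symm f hint, hf]
  · exact integral_undef hint

end Fubini

theorem setIntegral_Icc_eq_zero_of_hasDerivAt {f f' : ℝ → ℝ} {a b : ℝ}
    (hderiv : ∀ x, HasDerivAt f (f' x) x) (hint : IntervalIntegrable f' volume a b)
    (ha : f a = 0) (hb : f b = 0) : ∫ x in Icc a b, f' x = 0 := by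
  rcases le_or_gt a b with hab | hba
  · rw [integral_Icc_eq_integral_Ioc, ← integral_of_le hab,
      integral_eq_sub_of_hasDerivAt (fun x _ => hderiv x) hint, ha, hb, sub_self]
  · simp [Icc_eq_empty_of_lt hba]

def dot (a b : ℝ × ℝ) : ℝ := a.1 * b.1 + a.2 * b.2

theorem HasDerivAt.dot_self_div_two {u : ℝ → ℝ × ℝ} {u' : ℝ × ℝ} {t : ℝ}
    (hu : HasDerivAt u u' t) : HasDerivAt (fun s => dot (u s) (u s) / 2) (dot u' (u t)) t := by
  have h1 : HasDerivAt (fun s => (u s).1) u'.1 t := (hasFDerivAt_fst.comp_hasDerivAt t hu :)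
  have h2 : HasDerivAt (fun s => (u s).2) u'.2 t := (hasFDerivAt_snd.comp_hasDerivAt t hu :)
  refine (((h1.fun_mul h1).fun_add (h2.fun_mul h2)).div_const 2).congr_deriv ?_
  simp only [dot]
  ring

def cylinder (Q : Set (ℝ × ℝ)) : Set (ℝ × ℝ × ℝ) := {q | (q.1, q.2.1) ∈ Q}

theorem IsClosed.cylinder {Q : Set (ℝ × ℝ)} (hQ : IsClosed Q) : IsClosed (cylinder Q) :=
  hQ.preimage (by fun_prop)

theorem integrableOn_slab_of_eq_zero_off_cylinder {f : ℝ × ℝ × ℝ → ℝ} {Q : Set (ℝ × ℝ)}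
    {K : Set ℝ} (hf : Continuous f) (hQ : IsCompact Q) (hK : IsCompact K)
    (hfQ : ∀ q ∉ cylinder Q, f q = 0) : IntegrableOn f {q | q.2.2 ∈ K} := by
  have hbox : IsCompact ((Prod.fst '' Q) ×ˢ ((Prod.snd '' Q) ×ˢ K)) :=
    (hQ.image continuous_fst).prod ((hQ.image continuous_snd).prod hK)
  refine (hf.continuousOn.integrableOn_compact hbox).of_forall_sdiff_eq_zero
    (hK.isClosed.measurableSet.preimage (by fun_prop)) fun q ⟨hqK, hq⟩ => hfQ q fun hqQ => ?_
  exact hq ⟨⟨_, hqQ, rfl⟩, ⟨_, hqQ, rfl⟩, hqK⟩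

theorem volume_restrict_slab (s : Set ℝ) :
    (volume : Measure (ℝ × ℝ × ℝ)).restrict {q | q.2.2 ∈ s}
      = volume.prod (volume.prod (volume.restrict s)) := by
  have hs : {q : ℝ × ℝ × ℝ | q.2.2 ∈ s} = univ ×ˢ (univ ×ˢ s) := by ext; simp
  rw [hs, Measure.volume_eq_prod, ← Measure.prod_restrict, Measure.restrict_univ,
    Measure.volume_eq_prod, ← Measure.prod_restrict, Measure.restrict_univ]

noncomputable def horizDiv (v : ℝ × ℝ × ℝ → ℝ × ℝ) (q : ℝ × ℝ × ℝ) : ℝ :=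
  (pdX v q).1 + (pdY v q).2

noncomputable def halfSqPdZ (v : ℝ × ℝ × ℝ → ℝ × ℝ) (q : ℝ × ℝ × ℝ) : ℝ :=
  dot (pdZ v q) (pdZ v q) / 2

/- The partial derivatives `∂ₓ(v₁ E)`, `∂_y(v₂ E)`, `∂_z(w E)` of the flux `E·(v, w(v))`,
`E = |∂_z v|²/2`, using `∂_z w(v) = -∇_H·v`. -/
noncomputable def dxFlux (v : ℝ × ℝ × ℝ → ℝ × ℝ) (q : ℝ × ℝ × ℝ) : ℝ :=
  (pdX v q).1 * halfSqPdZ v q + (v q).1 * dot (fderiv ℝ (pdZ v) q (1, 0, 0)) (pdZ v q)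

noncomputable def dyFlux (v : ℝ × ℝ × ℝ → ℝ × ℝ) (q : ℝ × ℝ × ℝ) : ℝ :=
  (pdY v q).2 * halfSqPdZ v q + (v q).2 * dot (fderiv ℝ (pdZ v) q (0, 1, 0)) (pdZ v q)

noncomputable def dzFlux (v : ℝ × ℝ × ℝ → ℝ × ℝ) (q : ℝ × ℝ × ℝ) : ℝ :=
  -horizDiv v q * halfSqPdZ v q + wVert v q * dot (fderiv ℝ (pdZ v) q (0, 0, 1)) (pdZ v q)

theorem transport_integrand_eq_sum_flux (v : ℝ × ℝ × ℝ → ℝ × ℝ) (q : ℝ × ℝ × ℝ) :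
    dot ((v q).1 • fderiv ℝ (pdZ v) q (1, 0, 0) + (v q).2 • fderiv ℝ (pdZ v) q (0, 1, 0)
        + wVert v q • fderiv ℝ (pdZ v) q (0, 0, 1)) (pdZ v q)
      = dxFlux v q + dyFlux v q + dzFlux v q := by
  simp only [dxFlux, dyFlux, dzFlux, horizDiv, dot, Prod.fst_add, Prod.snd_add, Prod.smul_fst,
    Prod.smul_snd, smul_eq_mul]
  ring

section Regularity

variable {v : ℝ × ℝ × ℝ → ℝ × ℝ}

theorem contDiff_pdZ (hv : ContDiff ℝ 2 v) : ContDiff ℝ 1 (pdZ v) :=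
  (hv.fderiv_right (by norm_num)).clm_apply contDiff_const

theorem continuous_fderiv_apply_of_contDiff_two (hv : ContDiff ℝ 2 v) (e : ℝ × ℝ × ℝ) :
    Continuous fun q => fderiv ℝ v q e :=
  (hv.continuous_fderiv (by norm_num)).clm_apply continuous_const

theorem continuous_fderiv_pdZ_apply (hv : ContDiff ℝ 2 v) (e : ℝ × ℝ × ℝ) :
    Continuous fun q => fderiv ℝ (pdZ v) q e :=
  ((contDiff_pdZ hv).continuous_fderiv one_ne_zero).clm_apply continuous_const

theorem continuous_horizDiv (hv : ContDiff ℝ 2 v) : Continuous (horizDiv v) :=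
  (continuous_fderiv_apply_of_contDiff_two hv _).fst.add
    (continuous_fderiv_apply_of_contDiff_two hv _).snd

theorem continuous_halfSqPdZ (hv : ContDiff ℝ 2 v) : Continuous (halfSqPdZ v) := by
  have := (contDiff_pdZ hv).continuous
  unfold halfSqPdZ dot
  fun_prop

theorem continuous_wVert (hv : ContDiff ℝ 2 v) : Continuous (wVert v) := by
  have hdiv : Continuous fun p : (ℝ × ℝ × ℝ) × ℝ => horizDiv v (p.1.1, p.1.2.1, p.2) :=
    (continuous_horizDiv hv).comp (by fun_prop)
  have : wVert v = fun q => -∫ z' in (0 : ℝ)..q.2.2, horizDiv v (q.1, q.2.1, z') := by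
    funext q
    rw [wVert, integral_symm]
    rfl
  rw [this]
  exact (continuous_parametric_intervalIntegral_of_continuous hdiv (by fun_prop)).neg

theorem continuous_dxFlux (hv : ContDiff ℝ 2 v) : Continuous (dxFlux v) := by
  have := continuous_fderiv_apply_of_contDiff_two hv (1, 0, 0)
  have := continuous_fderiv_pdZ_apply hv (1, 0, 0)
  have := (contDiff_pdZ hv).continuous
  have := continuous_halfSqPdZ hv
  have := hv.continuous
  unfold dxFlux pdX dot
  fun_prop

theorem continuous_dyFlux (hv : ContDiff ℝ 2 v) : Continuous (dyFlux v) := by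
  have := continuous_fderiv_apply_of_contDiff_two hv (0, 1, 0)
  have := continuous_fderiv_pdZ_apply hv (0, 1, 0)
  have := (contDiff_pdZ hv).continuous
  have := continuous_halfSqPdZ hv
  have := hv.continuous
  unfold dyFlux pdY dot
  fun_prop

theorem continuous_dzFlux (hv : ContDiff ℝ 2 v) : Continuous (dzFlux v) := by
  have := continuous_horizDiv hv
  have := continuous_fderiv_pdZ_apply hv (0, 0, 1)
  have := (contDiff_pdZ hv).continuous
  have := continuous_halfSqPdZ hv
  have := continuous_wVert hv
  unfold dzFlux dot
  fun_prop

theorem hasDerivAt_halfSqPdZ_comp (hv : ContDiff ℝ 2 v) {c : ℝ → ℝ × ℝ × ℝ}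
    {e : ℝ × ℝ × ℝ} {t : ℝ} (hc : HasDerivAt c e t) :
    HasDerivAt (fun s => halfSqPdZ v (c s)) (dot (fderiv ℝ (pdZ v) (c t) e) (pdZ v (c t))) t :=
  ((contDiff_pdZ hv).differentiable one_ne_zero (c t)).hasFDerivAt.comp_hasDerivAt t hc
    |>.dot_self_div_two

theorem hasDerivAt_comp_of_contDiff_two (hv : ContDiff ℝ 2 v) {c : ℝ → ℝ × ℝ × ℝ}
    {e : ℝ × ℝ × ℝ} {t : ℝ} (hc : HasDerivAt c e t) :
    HasDerivAt (fun s => v (c s)) (fderiv ℝ v (c t) e) t :=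
  (hv.differentiable two_ne_zero (c t)).hasFDerivAt.comp_hasDerivAt t hc

theorem hasDerivAt_dxFlux (hv : ContDiff ℝ 2 v) (x y z : ℝ) :
    HasDerivAt (fun t => (v (t, y, z)).1 * halfSqPdZ v (t, y, z)) (dxFlux v (x, y, z)) x := by
  have hc : HasDerivAt (fun t : ℝ => (t, y, z)) ((1 : ℝ), (0 : ℝ), (0 : ℝ)) x :=
    (hasDerivAt_id x).prodMk (hasDerivAt_const x (y, z))
  exact (hasFDerivAt_fst.comp_hasDerivAt x (hasDerivAt_comp_of_contDiff_two hv hc) :).fun_mul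
    (hasDerivAt_halfSqPdZ_comp hv hc)

theorem hasDerivAt_dyFlux (hv : ContDiff ℝ 2 v) (x y z : ℝ) :
    HasDerivAt (fun t => (v (x, t, z)).2 * halfSqPdZ v (x, t, z)) (dyFlux v (x, y, z)) y := by
  have hc : HasDerivAt (fun t : ℝ => (x, t, z)) ((0 : ℝ), (1 : ℝ), (0 : ℝ)) y :=
    (hasDerivAt_const y x).prodMk ((hasDerivAt_id y).prodMk (hasDerivAt_const y z))
  exact (hasFDerivAt_snd.comp_hasDerivAt y (hasDerivAt_comp_of_contDiff_two hv hc) :).fun_mul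
    (hasDerivAt_halfSqPdZ_comp hv hc)

theorem hasDerivAt_wVert (hv : ContDiff ℝ 2 v) (x y z : ℝ) :
    HasDerivAt (fun t => wVert v (x, y, t)) (-horizDiv v (x, y, z)) z := by
  have hdiv : Continuous fun t => horizDiv v (x, y, t) :=
    (continuous_horizDiv hv).comp (by fun_prop)
  exact integral_hasDerivAt_left (hdiv.intervalIntegrable _ _)
    hdiv.stronglyMeasurable.stronglyMeasurableAtFilter hdiv.continuousAt

theorem hasDerivAt_dzFlux (hv : ContDiff ℝ 2 v) (x y z : ℝ) :
    HasDerivAt (fun t => wVert v (x, y, t) * halfSqPdZ v (x, y, t)) (dzFlux v (x, y, z)) z := by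
  have hc : HasDerivAt (fun t : ℝ => (x, y, t)) ((0 : ℝ), (0 : ℝ), (1 : ℝ)) z :=
    (hasDerivAt_const z x).prodMk ((hasDerivAt_const z y).prodMk (hasDerivAt_id z))
  exact (hasDerivAt_wVert hv x y z).fun_mul (hasDerivAt_halfSqPdZ_comp hv hc)

end Regularity

section Vanishing

variable {v : ℝ × ℝ × ℝ → ℝ × ℝ} {q : ℝ × ℝ × ℝ}

theorem pdZ_eq_zero_of_notMem_cylinder {Q : Set (ℝ × ℝ)} (hQ : IsClosed Q)
    (hsupp : ∀ x y z : ℝ, (x, y) ∉ Q → v (x, y, z) = 0) (hq : q ∉ cylinder Q) : pdZ v q = 0 := by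
  have hsub : tsupport v ⊆ cylinder Q :=
    closure_minimal (fun p hp => by_contra fun hpQ => hp (hsupp _ _ _ hpQ)) hQ.cylinder
  rw [pdZ, fderiv_of_notMem_tsupport ℝ fun h => hq (hsub h)]
  rfl

theorem halfSqPdZ_eq_zero_of_pdZ_eq_zero (h : pdZ v q = 0) : halfSqPdZ v q = 0 := by
  simp [halfSqPdZ, dot, h]

theorem dxFlux_eq_zero_of_pdZ_eq_zero (h : pdZ v q = 0) : dxFlux v q = 0 := by
  simp [dxFlux, halfSqPdZ, dot, h]

theorem dyFlux_eq_zero_of_pdZ_eq_zero (h : pdZ v q = 0) : dyFlux v q = 0 := by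
  simp [dyFlux, halfSqPdZ, dot, h]

theorem dzFlux_eq_zero_of_pdZ_eq_zero (h : pdZ v q = 0) : dzFlux v q = 0 := by
  simp [dzFlux, halfSqPdZ, dot, h]

end Vanishing

section Integrals

variable {v : ℝ × ℝ × ℝ → ℝ × ℝ}

theorem integral_dzFlux_slab (hv : ContDiff ℝ 2 v) {a : ℝ}
    (ha : ∀ x y : ℝ, wVert v (x, y, a) = 0) :
    ∫ q in {q | q.2.2 ∈ Icc a 0}, dzFlux v q = 0 := by
  rw [volume_restrict_slab]
  refine integral_prod_eq_zero_of_forall_integral_right fun x =>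
    integral_prod_eq_zero_of_forall_integral_right fun y =>
      setIntegral_Icc_eq_zero_of_hasDerivAt (hasDerivAt_dzFlux hv x y)
        (((continuous_dzFlux hv).comp (by fun_prop)).intervalIntegrable _ _) ?_ ?_
  · simp [ha]
  · simp [wVert]

variable {Q : Set (ℝ × ℝ)}

theorem integral_dxFlux_line (hv : ContDiff ℝ 2 v) (hQ : IsCompact Q)
    (hsupp : ∀ x y z : ℝ, (x, y) ∉ Q → v (x, y, z) = 0) (y z : ℝ) :
    ∫ x, dxFlux v (x, y, z) = 0 := by
  have hK := hQ.image continuous_fst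
  have hoff (x : ℝ) (hx : x ∉ Prod.fst '' Q) : pdZ v (x, y, z) = 0 :=
    pdZ_eq_zero_of_notMem_cylinder hQ.isClosed hsupp fun hxQ => hx ⟨_, hxQ, rfl⟩
  refine integral_eq_zero_of_hasDerivAt_of_integrable (hasDerivAt_dxFlux hv · y z) ?_ ?_
  · exact ((continuous_dxFlux hv).comp (by fun_prop)).integrable_of_hasCompactSupport
      (HasCompactSupport.intro hK fun x hx => dxFlux_eq_zero_of_pdZ_eq_zero (hoff x hx))
  · refine (continuous_iff_continuousAt.2 fun x => (hasDerivAt_dxFlux hv x y z).continuousAt)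
      |>.integrable_of_hasCompactSupport (HasCompactSupport.intro hK fun x hx => ?_)
    simp [halfSqPdZ_eq_zero_of_pdZ_eq_zero (hoff x hx)]

theorem integral_dyFlux_line (hv : ContDiff ℝ 2 v) (hQ : IsCompact Q)
    (hsupp : ∀ x y z : ℝ, (x, y) ∉ Q → v (x, y, z) = 0) (x z : ℝ) :
    ∫ y, dyFlux v (x, y, z) = 0 := by
  have hK := hQ.image continuous_snd
  have hoff (y : ℝ) (hy : y ∉ Prod.snd '' Q) : pdZ v (x, y, z) = 0 :=
    pdZ_eq_zero_of_notMem_cylinder hQ.isClosed hsupp fun hyQ => hy ⟨_, hyQ, rfl⟩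
  refine integral_eq_zero_of_hasDerivAt_of_integrable (hasDerivAt_dyFlux hv x · z) ?_ ?_
  · exact ((continuous_dyFlux hv).comp (by fun_prop)).integrable_of_hasCompactSupport
      (HasCompactSupport.intro hK fun y hy => dyFlux_eq_zero_of_pdZ_eq_zero (hoff y hy))
  · refine (continuous_iff_continuousAt.2 fun y => (hasDerivAt_dyFlux hv x y z).continuousAt)
      |>.integrable_of_hasCompactSupport (HasCompactSupport.intro hK fun y hy => ?_)
    simp [halfSqPdZ_eq_zero_of_pdZ_eq_zero (hoff y hy)]

theorem integral_dxFlux_slab (hv : ContDiff ℝ 2 v) (hQ : IsCompact Q)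
    (hsupp : ∀ x y z : ℝ, (x, y) ∉ Q → v (x, y, z) = 0) (s : Set ℝ) :
    ∫ q in {q | q.2.2 ∈ s}, dxFlux v q = 0 := by
  rw [volume_restrict_slab]
  exact integral_prod_eq_zero_of_forall_integral_left fun p =>
    integral_dxFlux_line hv hQ hsupp p.1 p.2

theorem integral_dyFlux_slab (hv : ContDiff ℝ 2 v) (hQ : IsCompact Q)
    (hsupp : ∀ x y z : ℝ, (x, y) ∉ Q → v (x, y, z) = 0) (s : Set ℝ) :
    ∫ q in {q | q.2.2 ∈ s}, dyFlux v q = 0 := by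
  rw [volume_restrict_slab]
  exact integral_prod_eq_zero_of_forall_integral_right fun x =>
    integral_prod_eq_zero_of_forall_integral_left fun z => integral_dyFlux_line hv hQ hsupp x z

end Integrals

theorem transport_vertical_gradient_orthogonal_general
    (h : ℝ)
    (v : ℝ × ℝ × ℝ → ℝ × ℝ) (hv : ContDiff ℝ 2 v)
    (Q : Set (ℝ × ℝ)) (hQ : IsCompact Q)
    (hsupp : ∀ x y z : ℝ, (x, y) ∉ Q → v (x, y, z) = 0)
    (hbaro : ∀ x y : ℝ,
      (∫ z in (-h)..(0:ℝ), ((pdX v (x, y, z)).1 + (pdY v (x, y, z)).2)) = 0) :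
    (∫ q : ℝ × ℝ × ℝ,
        (((v q).1 • fderiv ℝ (pdZ v) q (1, 0, 0)
            + (v q).2 • fderiv ℝ (pdZ v) q (0, 1, 0)
            + wVert v q • fderiv ℝ (pdZ v) q (0, 0, 1)).1 * (pdZ v q).1
          + ((v q).1 • fderiv ℝ (pdZ v) q (1, 0, 0)
              + (v q).2 • fderiv ℝ (pdZ v) q (0, 1, 0)
              + wVert v q • fderiv ℝ (pdZ v) q (0, 0, 1)).2 * (pdZ v q).2)
        ∂((volume : Measure (ℝ × ℝ × ℝ)).restrict
            {q : ℝ × ℝ × ℝ | q.2.2 ∈ Set.Icc (-h) 0})) = 0 := by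
  have hoff (q : ℝ × ℝ × ℝ) (hq : q ∉ cylinder Q) : pdZ v q = 0 :=
    pdZ_eq_zero_of_notMem_cylinder hQ.isClosed hsupp hq
  have hint {f : ℝ × ℝ × ℝ → ℝ} (hf : Continuous f) (hfQ : ∀ q, pdZ v q = 0 → f q = 0) :
      IntegrableOn f {q | q.2.2 ∈ Icc (-h) 0} :=
    integrableOn_slab_of_eq_zero_off_cylinder hf hQ isCompact_Icc fun q hq => hfQ q (hoff q hq)
  have hx := hint (continuous_dxFlux hv) fun _ => dxFlux_eq_zero_of_pdZ_eq_zero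
  have hy := hint (continuous_dyFlux hv) fun _ => dyFlux_eq_zero_of_pdZ_eq_zero
  have hz := hint (continuous_dzFlux hv) fun _ => dzFlux_eq_zero_of_pdZ_eq_zero
  calc _ = ∫ q in {q | q.2.2 ∈ Icc (-h) 0}, dxFlux v q + dyFlux v q + dzFlux v q :=
        integral_congr_ae (ae_of_all _ (transport_integrand_eq_sum_flux v))
    _ = 0 := by
      rw [integral_add (hx.fun_add hy) hz, integral_add hx hy, integral_dxFlux_slab hv hQ hsupp,
        integral_dyFlux_slab hv hQ hsupp, integral_dzFlux_slab hv hbaro, add_zero, add_zero]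

/-- **Orthogonality of the transport of the vertical gradient.**
Let `v : ℝ² × ℝ → ℝ²` be twice continuously differentiable, vanishing for
horizontal points outside a compact `Q ⊆ ℝ²`, and with
`∫_{−h}^0 (∇_H·v)(x,y,z) dz = 0` for all `(x,y)`. Then
`∫_{ℝ²×[−h,0]} [(v·∇_H)∂_z v + w(v)∂_{zz}v] · ∂_z v = 0`. -/
theorem transport_vertical_gradient_orthogonal
    (h : ℝ) (hh : 0 < h)
    (v : ℝ × ℝ × ℝ → ℝ × ℝ) (hv : ContDiff ℝ 2 v)
    (Q : Set (ℝ × ℝ)) (hQ : IsCompact Q)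
    (hsupp : ∀ x y z : ℝ, (x, y) ∉ Q → v (x, y, z) = 0)
    (hbaro : ∀ x y : ℝ,
      (∫ z in (-h)..(0:ℝ), ((pdX v (x, y, z)).1 + (pdY v (x, y, z)).2)) = 0) :
    (∫ q : ℝ × ℝ × ℝ,
        (((v q).1 • fderiv ℝ (pdZ v) q (1, 0, 0)
            + (v q).2 • fderiv ℝ (pdZ v) q (0, 1, 0)
            + wVert v q • fderiv ℝ (pdZ v) q (0, 0, 1)).1 * (pdZ v q).1
          + ((v q).1 • fderiv ℝ (pdZ v) q (1, 0, 0)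
              + (v q).2 • fderiv ℝ (pdZ v) q (0, 1, 0)
              + wVert v q • fderiv ℝ (pdZ v) q (0, 0, 1)).2 * (pdZ v q).2)
        ∂((volume : Measure (ℝ × ℝ × ℝ)).restrict
            {q : ℝ × ℝ × ℝ | q.2.2 ∈ Set.Icc (-h) 0})) = 0 :=
  transport_vertical_gradient_orthogonal_general h v hv Q hQ hsupp hbaro
end
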